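/- Let G be a group and g ∈ G. Suppose that for every natural number n there exist a natural number k ≥ n, a family of groups (H i) for i : Fin k, nontrivial elements h_i ∈ [H_i,H_i] for each i, and a group homomorphism φ : G → *_{i} H_i into the free product, such that φ(g) = ∏_{i} of(h_i) (the product, in order, of the canonical images of the h_i). Then g does not belong to the commutator subgroup [G,G]; in particular G is not a perfect group, i.e. commutator G ≠ ⊤, and the abelianization of G is nontrivial. -/

import Mathlib

/-!
Order the factors of a free product and let `F x` be the number of ascents minus the number of
descents in the sequence of factor indices of the reduced word of `x`. The reduced words of `x`,
`y` and `x * y` form a tripod: a suffix of `x` cancels against the reversed prefix of `y`, with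
at most one letter in the middle. Since reversing a sequence negates its signed ascent count,
`F` is a quasimorphism of defect `6`, so `|F|` is at most `6 * (6 * n + 1)` on products of `n`
commutators. On `of h₁ * ⋯ * of h_k` with all `hᵢ ≠ 1` the indices increase, so `F = k - 1`.
Pulling `F` back along `φ`, a product of `n` commutators equal to `g` is incompatible with
`k > 36 * n + 7`.
-/

open scoped commutatorElement in
/-- The commutator length of an element `g` of a group `G`: the infimum (in `ℕ∞`) of the
set of natural numbers `n` such that `g` is a product of `n` commutators. -/
noncomputable def commutatorLength {G : Type*} [Group G] (g : G) : ℕ∞ :=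
  sInf {N : ℕ∞ | ∃ n : ℕ, N = n ∧ ∃ a b : Fin n → G,
    g = (List.ofFn fun i => ⁅a i, b i⁆).prod}

section LinearOrder

variable {ι : Type*} [LinearOrder ι]

def cmpSign (a b : ι) : ℤ := if a < b then 1 else if b < a then -1 else 0

lemma abs_cmpSign_le (a b : ι) : |cmpSign a b| ≤ 1 := by
  unfold cmpSign; split_ifs <;> simp

lemma cmpSign_swap (a b : ι) : cmpSign b a = -cmpSign a b := by
  unfold cmpSign
  rcases lt_trichotomy a b with h | rfl | h
  · simp [h, h.not_gt]
  · simp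
  · simp [h, h.not_gt]

namespace List

def signedAscents : List ι → ℤ
  | [] => 0
  | [_] => 0
  | a :: b :: l => cmpSign a b + signedAscents (b :: l)

lemma signedAscents_of_length_le_one {l : List ι} (hl : l.length ≤ 1) :
    signedAscents l = 0 := by
  match l, hl with
  | [], _ => rfl
  | [_], _ => rfl

lemma abs_signedAscents_append_sub_le (l₁ l₂ : List ι) :
    |signedAscents (l₁ ++ l₂) - signedAscents l₁ - signedAscents l₂| ≤ 1 := by
  match l₁, l₂ with
  | [], _ => simp [signedAscents]
  | [_], [] => simp [signedAscents]
  | [a], b :: l => simpa [signedAscents] using abs_cmpSign_le a b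
  | a :: b :: l₁, l₂ =>
    simpa [signedAscents, add_sub_add_left_eq_sub] using
      abs_signedAscents_append_sub_le (b :: l₁) l₂

lemma signedAscents_append_pair (l : List ι) (a b : ι) :
    signedAscents (l ++ [a, b]) = signedAscents (l ++ [a]) + cmpSign a b := by
  match l with
  | [] => simp [signedAscents]
  | [c] => simp [signedAscents]
  | c :: d :: l =>
    simp only [cons_append, signedAscents]
    rw [← cons_append, ← cons_append, signedAscents_append_pair (d :: l)]
    ring

lemma signedAscents_reverse : ∀ l : List ι, signedAscents l.reverse = -signedAscents l
  | [] => rfl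
  | [_] => rfl
  | a :: b :: l => by
    rw [reverse_cons, reverse_cons, append_assoc, singleton_append, signedAscents_append_pair,
      ← reverse_cons, signedAscents_reverse (b :: l), cmpSign_swap, signedAscents]
    ring

lemma sub_one_le_signedAscents_of_isChain_lt : ∀ {l : List ι}, l.IsChain (· < ·) →
    (l.length : ℤ) - 1 ≤ signedAscents l
  | [], _ => by simp [signedAscents]
  | [_], _ => by simp [signedAscents]
  | a :: b :: l, h => by
    obtain ⟨hab, h⟩ := isChain_cons_cons.mp h
    have := sub_one_le_signedAscents_of_isChain_lt h
    simp only [signedAscents, cmpSign, if_pos hab, length_cons] at this ⊢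
    push_cast at this ⊢
    linarith

lemma abs_signedAscents_tripod_le {p m c s : List ι} (hm : m.length ≤ 1) :
    |signedAscents (p ++ m ++ s) - signedAscents (p ++ m ++ c)
      - signedAscents (c.reverse ++ m ++ s)| ≤ 6 := by
  have hpm := abs_signedAscents_append_sub_le p m
  have hpms := abs_signedAscents_append_sub_le (p ++ m) s
  have hpmc := abs_signedAscents_append_sub_le (p ++ m) c
  have hcm := abs_signedAscents_append_sub_le c.reverse m
  have hcms := abs_signedAscents_append_sub_le (c.reverse ++ m) s
  rw [signedAscents_reverse, signedAscents_of_length_le_one hm] at *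
  rw [abs_le] at *
  constructor <;> linarith

end List

end LinearOrder

namespace Monoid.CoprodI.Word

variable {ι : Type*} {M : ι → Type*} [∀ i, Monoid (M i)]

def indices (w : Word M) : List ι := w.toList.map Sigma.fst

lemma fstIdx_eq_head?_indices (w : Word M) : w.fstIdx = w.indices.head? := by
  simp [fstIdx, indices, List.head?_map]

lemma indices_cons {i : ι} (m : M i) (w : Word M) (hw : w.fstIdx ≠ some i) (hm : m ≠ 1) :
    (cons m w hw hm).indices = i :: w.indices := rfl

variable [DecidableEq ι] [∀ i, DecidableEq (M i)]

lemma indices_of_smul_of_fstIdx_ne {i : ι} {m : M i} (hm : m ≠ 1) {w : Word M}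
    (hw : w.fstIdx ≠ some i) : (of m • w).indices = i :: w.indices := by
  rw [← cons_eq_smul (h1 := hw) (h2 := hm), indices_cons]

lemma indices_of_smul_of_fstIdx_eq {i : ι} (m : M i) {w : Word M} (hw : w.fstIdx = some i) :
    (of m • w).indices = w.indices ∨ (of m • w).indices = w.indices.tail := by
  cases w using consRecOn with
  | empty => simp [fstIdx, empty] at hw
  | cons j n w hj hn =>
    obtain rfl : j = i := by simpa [fstIdx_cons] using hw
    have : of m • cons n w hj hn = of (m * n) • w := by
      rw [cons_eq_smul, ← mul_smul, ← map_mul]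
    rw [this, indices_cons]
    by_cases hmn : m * n = 1
    · right
      rw [hmn, map_one, one_smul]; rfl
    · left
      rw [indices_of_smul_of_fstIdx_ne hmn hj]

theorem exists_indices_prod_smul (u v : Word M) :
    ∃ p m c s : List ι, m.length ≤ 1 ∧ u.indices = p ++ m ++ c ∧
      v.indices = c.reverse ++ m ++ s ∧ (u.prod • v).indices = p ++ m ++ s := by
  induction u using consRecOn with
  | empty =>
    exact ⟨[], [], [], v.indices, by simp, rfl, by simp, by rw [prod_empty, one_smul]; rfl⟩
  | cons i x u hu hx ih =>
    obtain ⟨p, m, c, s, hm, hpmc, hcms, hpms⟩ := ih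
    rw [prod_cons, mul_smul, indices_cons]
    rcases hpm : p ++ m with _ | ⟨j, t⟩
    · obtain ⟨rfl, rfl⟩ := List.append_eq_nil_iff.mp hpm
      simp only [List.append_nil, List.nil_append] at hpmc hcms hpms
      by_cases hw : (u.prod • v).fstIdx = some i
      · obtain ⟨s, rfl⟩ : ∃ s', s = i :: s' := by
          rw [fstIdx_eq_head?_indices, hpms] at hw
          exact ⟨s.tail, (List.cons_head?_tail hw).symm⟩
        rcases indices_of_smul_of_fstIdx_eq x hw with h | h
        · exact ⟨[], [i], c, s, by simp, by simp [hpmc], by simp [hcms], by simp [h, hpms]⟩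
        · exact ⟨[], [], i :: c, s, by simp, by simp [hpmc], by simp [hcms], by simp [h, hpms]⟩
      · exact ⟨[i], [], c, s, by simp, by simp [hpmc], by simp [hcms],
          by simp [indices_of_smul_of_fstIdx_ne hx hw, hpms]⟩
    · have hw : (u.prod • v).fstIdx ≠ some i := by
        simpa [fstIdx_eq_head?_indices, hpms, hpmc, hpm] using hu
      exact ⟨i :: p, m, c, s, hm, by simp [hpmc], hcms,
        by simp [indices_of_smul_of_fstIdx_ne hx hw, hpms]⟩

end Monoid.CoprodI.Word

open scoped commutatorElement

def IsQuasimorphism {G : Type*} [Mul G] (F : G → ℤ) (D : ℤ) : Prop :=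
  ∀ x y, |F (x * y) - F x - F y| ≤ D

section Quasimorphism

variable {G : Type*} [Group G] {F : G → ℤ} {D : ℤ}

lemma IsQuasimorphism.comp {H : Type*} [Group H] {F : H → ℤ} (hF : IsQuasimorphism F D)
    (φ : G →* H) : IsQuasimorphism (F ∘ φ) D := fun x y => by
  simpa only [Function.comp_apply, map_mul] using hF (φ x) (φ y)

lemma IsQuasimorphism.abs_map_one_le (hF : IsQuasimorphism F D) : |F 1| ≤ D := by
  simpa [abs_sub_comm] using hF 1 1

lemma IsQuasimorphism.abs_map_commutatorElement_le (hF : IsQuasimorphism F D) (a b : G) :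
    |F ⁅a, b⁆| ≤ 5 * D := by
  have h₁ := hF (a * b) (a⁻¹ * b⁻¹)
  have h₂ := hF (a⁻¹ * b⁻¹) (b * a)
  have h₃ := hF a b
  have h₄ := hF b a
  have h₅ := hF.abs_map_one_le
  rw [← mul_assoc, ← commutatorElement_def] at h₁
  rw [show a⁻¹ * b⁻¹ * (b * a) = 1 by group] at h₂
  rw [abs_le] at *
  constructor <;> linarith

lemma IsQuasimorphism.abs_map_list_prod_le_of_mem_commutatorSet (hF : IsQuasimorphism F D)
    {l : List G} (hl : ∀ x ∈ l, x ∈ commutatorSet G) :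
    |F l.prod| ≤ (6 * l.length + 1) * D := by
  induction l with
  | nil => simpa using hF.abs_map_one_le
  | cons x l ih =>
    obtain ⟨a, b, rfl⟩ := hl x List.mem_cons_self
    have hx := hF.abs_map_commutatorElement_le a b
    have hl' := ih fun y hy => hl y (List.mem_cons_of_mem _ hy)
    have hxl := hF ⁅a, b⁆ l.prod
    rw [List.prod_cons, List.length_cons]
    rw [abs_le] at *
    push_cast
    constructor <;> linarith

end Quasimorphism

lemma exists_list_prod_eq_of_mem_commutator {G : Type*} [Group G] {g : G}
    (hg : g ∈ commutator G) :
    ∃ l : List G, (∀ x ∈ l, x ∈ commutatorSet G) ∧ l.prod = g := by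
  rw [commutator_eq_closure] at hg
  induction hg using Subgroup.closure_induction with
  | mem x hx => exact ⟨[x], by simpa using hx, by simp⟩
  | one => exact ⟨[], by simp, by simp⟩
  | mul x y _ _ hx hy =>
    obtain ⟨lx, hlx, rfl⟩ := hx
    obtain ⟨ly, hly, rfl⟩ := hy
    exact ⟨lx ++ ly, fun z hz => (List.mem_append.mp hz).elim (hlx z) (hly z), List.prod_append⟩
  | inv x _ hx =>
    obtain ⟨l, hl, rfl⟩ := hx
    refine ⟨(l.map (·⁻¹)).reverse, ?_, by simp [List.prod_inv_reverse]⟩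
    simp only [List.mem_reverse, List.mem_map]
    rintro _ ⟨y, hy, rfl⟩
    obtain ⟨a, b, rfl⟩ := hl y hy
    exact ⟨b, a, (commutatorElement_inv a b).symm⟩

namespace Monoid.CoprodI

variable {ι : Type*} [LinearOrder ι] {M : ι → Type*} [∀ i, Monoid (M i)]
  [∀ i, DecidableEq (M i)]

def orderQuasimorphism (x : CoprodI M) : ℤ := (Word.equiv x).indices.signedAscents

lemma isQuasimorphism_orderQuasimorphism :
    IsQuasimorphism (orderQuasimorphism (M := M)) 6 := by
  intro x y
  have hxy : Word.equiv (x * y) = (Word.equiv x).prod • Word.equiv y := by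
    rw [show (Word.equiv x).prod = x from Word.equiv.symm_apply_apply x]
    exact mul_smul x y _
  obtain ⟨p, m, c, s, hm, hx, hy, hxy'⟩ :=
    Word.exists_indices_prod_smul (Word.equiv x) (Word.equiv y)
  rw [orderQuasimorphism, orderQuasimorphism, orderQuasimorphism, hxy, hx, hy, hxy']
  exact List.abs_signedAscents_tripod_le hm

lemma sub_one_le_orderQuasimorphism_prod_ofFn {k : ℕ} {H : Fin k → Type*} [∀ i, Monoid (H i)]
    [∀ i, DecidableEq (H i)] {h : ∀ i, H i} (hh : ∀ i, h i ≠ 1) :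
    (k : ℤ) - 1 ≤ orderQuasimorphism (List.ofFn fun i => of (h i)).prod := by
  let w : Word H :=
    { toList := List.ofFn fun i => ⟨i, h i⟩
      ne_one := by simpa [List.mem_ofFn] using hh
      chain_ne := List.isChain_ofFn.mpr fun i _ => by simp }
  have hw : w.prod = (List.ofFn fun i => of (h i)).prod := by
    simp [w, Word.prod, List.map_ofFn, Function.comp_def]
  have hidx : w.indices = List.ofFn fun i => i := by
    simp [w, Word.indices, List.map_ofFn, Function.comp_def]
  have hchain : (List.ofFn fun i : Fin k => i).IsChain (· < ·) :=
    List.isChain_ofFn.mpr fun i _ => by simp [Fin.lt_def]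
  rw [← hw, orderQuasimorphism, show Word.equiv w.prod = w from Word.equiv.apply_symm_apply w,
    hidx]
  simpa using List.sub_one_le_signedAscents_of_isChain_lt hchain

end Monoid.CoprodI

/-- If for every `n` there is `k ≥ n`, groups `H i` (`i : Fin k`), nontrivial elements
`h i ∈ [H i, H i]`, and a homomorphism `φ : G → H₁ * ⋯ * H_k` with
`φ g = h₁ h₂ ⋯ h_k`, then `g ∉ [G,G]`; in particular `G` is not perfect and its
abelianization is nontrivial. -/
theorem not_mem_commutator_of_maps_to_coprodI {G : Type*} [Group G] (g : G)
    (hyp : ∀ n : ℕ, ∃ k : ℕ, n ≤ k ∧ ∃ (H : Fin k → Type) (_ : ∀ i, Group (H i))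
      (h : ∀ i, H i) (φ : G →* Monoid.CoprodI H),
        (∀ i, h i ≠ 1 ∧ h i ∈ commutator (H i)) ∧
        φ g = (List.ofFn fun i => Monoid.CoprodI.of (h i)).prod) :
    g ∉ commutator G ∧ commutator G ≠ ⊤ ∧ Nontrivial (Abelianization G) := by
  classical
  have hg : g ∉ commutator G := by
    intro hg
    obtain ⟨l, hl, rfl⟩ := exists_list_prod_eq_of_mem_commutator hg
    obtain ⟨k, hk, H, _, h, φ, hh, hφ⟩ := hyp (6 * (6 * l.length + 1) + 2)
    have hupper := ((Monoid.CoprodI.isQuasimorphism_orderQuasimorphism (M := H)).comp φ)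
      |>.abs_map_list_prod_le_of_mem_commutatorSet hl
    have hlower := Monoid.CoprodI.sub_one_le_orderQuasimorphism_prod_ofFn fun i => (hh i).1
    rw [← hφ] at hlower
    rw [Function.comp_apply, abs_le] at hupper
    have hk' : (6 * (6 * l.length + 1) + 2 : ℤ) ≤ k := by exact_mod_cast hk
    linarith [hupper.2]
  refine ⟨hg, fun htop => hg (htop ▸ Subgroup.mem_top g), ⟨Abelianization.of g, 1, ?_⟩⟩
  rwa [ne_eq, ← MonoidHom.mem_ker, Abelianization.ker_of]
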